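/- The number of orbits of R_n^B under the valley-hopping action equals the Bell number B_{n-1}; equivalently, ∑_{k=1}^{⌈n/2⌉} a_{n,k} = B_{n-1}, and each orbit of a permutation with k mruns has size 2^{n-k}. -/

import Mathlib

/-- `w` is a signed permutation of length n: a list of nonzero integers whose
absolute values form a permutation of {1,...,n}. -/
def IsSignedPerm (n : ℕ) (w : List ℤ) : Prop :=
  w.length = n ∧ (w.map Int.natAbs).Perm (List.range' 1 n)

/-- Position `i` is the bottom of a modular run (mrun) of `w`: either `i = 0`
or the previous entry is larger in absolute value. -/
def IsBottom (w : List ℤ) (i : ℕ) : Prop :=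
  i = 0 ∨ (w.getD i 0).natAbs < (w.getD (i - 1) 0).natAbs

instance (w : List ℤ) (i : ℕ) : Decidable (IsBottom w i) := by
  unfold IsBottom; infer_instance

/-- `w ∈ R_n^B`: `w` is a signed permutation of length n which is the flattening of a
type B merging-free partition without zero block; equivalently the bottoms of its
mruns are positive and increasing, and the absolute value of the top of each mrun
exceeds the bottom of the following mrun. -/
def MemR (n : ℕ) (w : List ℤ) : Prop :=
  IsSignedPerm n w ∧
  (∀ i, i < n → IsBottom w i → 0 < w.getD i 0) ∧
  (∀ i j, i < j → j < n → IsBottom w i → IsBottom w j → w.getD i 0 < w.getD j 0) ∧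
  (∀ j, 0 < j → j < n → IsBottom w j → w.getD j 0 < ((w.getD (j - 1) 0).natAbs : ℤ))

/-- The number of descents of `w`: positions i with `w_i > w_{i+1}`. -/
def des (w : List ℤ) : ℕ :=
  ((List.range (w.length - 1)).filter
    (fun i => decide (w.getD (i + 1) 0 < w.getD i 0))).length

/-- The major index of `w`: sum of the (1-based) descent positions. -/
def maj (w : List ℤ) : ℕ :=
  ∑ i ∈ Finset.range (w.length - 1),
    if w.getD (i + 1) 0 < w.getD i 0 then i + 1 else 0

/-- The number of modular runs (mruns) of `w`. -/
def numRuns (w : List ℤ) : ℕ :=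
  ((List.range w.length).filter (fun i => decide (IsBottom w i))).length

/-- `d n k`: the number of permutations in `R_n^B` having `k` descents. -/
noncomputable def dcount (n k : ℕ) : ℕ :=
  Nat.card {w : List ℤ // MemR n w ∧ des w = k}

/-- `τ` lies in the valley-hopping orbit of `σ`: same absolute values everywhere,
and the same (positive) entries at the bottoms of the mruns of `σ`. -/
def InOrb (σ τ : List ℤ) : Prop :=
  τ.length = σ.length ∧ ∀ i, i < σ.length →
    (τ.getD i 0).natAbs = (σ.getD i 0).natAbs ∧
    (IsBottom σ i → τ.getD i 0 = σ.getD i 0)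

/-- `a n k`: the number of run-sorted permutations of [n] having k runs. -/
def a : ℕ → ℕ → ℕ
  | 0, 0 => 1
  | 0, _ + 1 => 0
  | 1, 0 => 0
  | 1, 1 => 1
  | 1, _ + 2 => 0
  | _ + 2, 0 => 0
  | n + 2, k + 1 => (k + 1) * a (n + 1) (k + 1) + n * a n k

/-- The Bell numbers: `B_0 = 1`, `B_{m+1} = ∑_{j=0}^{m} C(m,j) B_j`. -/
def bell : ℕ → ℕ
  | 0 => 1
  | m + 1 => ∑ j ∈ (Finset.range (m + 1)).attach, Nat.choose m j.1 * bell j.1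
decreasing_by exact Finset.mem_range.mp j.2

/-!
The row sums `S n = ∑ₖ a n k` satisfy the Bell recurrence `S (m+2) = ∑ⱼ C(m,j) S (j+1)`:
this is the sum over `k` of the identity
`∑ⱼ C(m,j) a (j+1) k + a (m+1) (k+1) = a (m+2) (k+1) + a (m+1) k`,
which follows from the recurrence for `a` by induction on `m`. Hence `S (m+1) = B_m`.

The orbit of `σ` consists of the lists obtained from `σ` by negating the entries on an
arbitrary set of non-bottom positions, and distinct sets give distinct lists because the
entries of a signed permutation are nonzero.
-/

open Finset

theorem a_add_two_succ (n k : ℕ) :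
    a (n + 2) (k + 1) = (k + 1) * a (n + 1) (k + 1) + n * a n k := rfl

theorem a_succ_zero (n : ℕ) : a (n + 1) 0 = 0 := by
  cases n <;> rfl

theorem a_eq_zero_of_lt : ∀ {n k : ℕ}, n + 1 < 2 * k → a n k = 0
  | 0, _ + 1, _ => rfl
  | 1, _ + 2, _ => rfl
  | n + 2, k + 1, h => by
    rw [a_add_two_succ, a_eq_zero_of_lt (by omega), a_eq_zero_of_lt (n := n) (by omega),
      mul_zero, mul_zero, add_zero]
  | 0, 0, h | 1, 0, h | 1, 1, h | _ + 2, 0, h => by omega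

theorem sum_choose_mul_a_add_two (m k : ℕ) :
    ∑ j ∈ range (m + 2), (m + 1).choose j * a (j + 2) (k + 1) =
      (k + 1) * ∑ j ∈ range (m + 2), (m + 1).choose j * a (j + 1) (k + 1) +
        (m + 1) * ∑ j ∈ range (m + 1), m.choose j * a (j + 1) k := by
  have absorb : ∑ j ∈ range (m + 2), (m + 1).choose j * (j * a j k) =
      (m + 1) * ∑ j ∈ range (m + 1), m.choose j * a (j + 1) k := by
    rw [sum_range_succ', mul_sum]
    simp only [zero_mul, mul_zero, add_zero]
    refine sum_congr rfl fun j _ => ?_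
    rw [← mul_assoc, ← mul_assoc, Nat.add_one_mul_choose_eq]
  rw [← absorb, mul_sum, ← sum_add_distrib]
  refine sum_congr rfl fun j _ => ?_
  rw [a_add_two_succ]
  ring

theorem sum_choose_mul_a_succ : ∀ m k : ℕ,
    ∑ j ∈ range (m + 1), m.choose j * a (j + 1) k + a (m + 1) (k + 1) =
      a (m + 2) (k + 1) + a (m + 1) k
  | 0, 0 | 1, 0 | 0, _ + 1 | 1, _ + 1 => by simp [sum_range_succ, a]
  | m + 2, 0 => by simp [a_succ_zero, a_add_two_succ]
  | m + 2, k + 1 => by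
    have ih₁ := sum_choose_mul_a_succ (m + 1) (k + 1)
    have ih₀ := sum_choose_mul_a_succ m k
    have pascal := sum_choose_succ_mul (fun j _ => a (j + 1) (k + 1)) (m + 1)
    simp only [Nat.cast_id] at pascal
    rw [pascal, sum_choose_mul_a_add_two]
    rw [a_add_two_succ (m + 1) (k + 1)] at ih₁
    rw [a_add_two_succ (m + 2) (k + 1), a_add_two_succ (m + 1) k, a_add_two_succ (m + 1) (k + 1)]
    linear_combination (k + 2) * ih₁ + (m + 1) * ih₀

def rowSum (n : ℕ) : ℕ := ∑ k ∈ range (n + 1), a n k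

theorem sum_range_a_eq_rowSum {n N : ℕ} (h : n < N) : ∑ k ∈ range N, a n k = rowSum n :=
  (sum_subset (range_subset_range.2 (by omega)) fun _ _ hk =>
    a_eq_zero_of_lt (by rw [mem_range] at hk; omega)).symm

theorem sum_range_a_succ_succ_eq_rowSum {n N : ℕ} (h : n < N) :
    ∑ k ∈ range N, a (n + 1) (k + 1) = rowSum (n + 1) := by
  rw [← sum_range_a_eq_rowSum (N := N + 1) (by omega), sum_range_succ', a_succ_zero, add_zero]

theorem rowSum_add_two (m : ℕ) :
    rowSum (m + 2) = ∑ j ∈ range (m + 1), m.choose j * rowSum (j + 1) := by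
  have key := sum_congr (s₁ := range (m + 2)) rfl fun k _ => sum_choose_mul_a_succ m k
  rw [sum_add_distrib, sum_add_distrib, sum_comm, sum_range_a_succ_succ_eq_rowSum (by omega),
    sum_range_a_succ_succ_eq_rowSum (by omega), sum_range_a_eq_rowSum (by omega)] at key
  have hsum : ∑ j ∈ range (m + 1), ∑ k ∈ range (m + 2), m.choose j * a (j + 1) k =
      ∑ j ∈ range (m + 1), m.choose j * rowSum (j + 1) :=
    sum_congr rfl fun j hj => by
      rw [← mul_sum, sum_range_a_eq_rowSum (by rw [mem_range] at hj; omega)]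
  rw [hsum] at key
  exact (Nat.add_right_cancel key).symm

theorem bell_succ (m : ℕ) : bell (m + 1) = ∑ j ∈ range (m + 1), m.choose j * bell j := by
  rw [bell]
  exact sum_attach (range (m + 1)) fun j => m.choose j * bell j

theorem rowSum_succ_eq_bell (m : ℕ) : rowSum (m + 1) = bell m := by
  induction m using Nat.strong_induction_on with
  | _ m ih =>
    cases m with
    | zero => simp [rowSum, sum_range_succ, a, bell]
    | succ m =>
      rw [rowSum_add_two, bell_succ]
      exact sum_congr rfl fun j hj => by rw [ih j (by rw [mem_range] at hj; omega)]

theorem sum_Icc_a_eq_rowSum {n : ℕ} (hn : 1 ≤ n) :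
    ∑ k ∈ Icc 1 ((n + 1) / 2), a n k = rowSum n := by
  obtain ⟨n, rfl⟩ : ∃ m, n = m + 1 := ⟨n - 1, by omega⟩
  refine sum_subset (fun k hk => by simp only [mem_Icc, mem_range] at hk ⊢; omega)
    fun k _ hk => ?_
  rw [mem_Icc, not_and_or, not_le, not_le] at hk
  rcases hk with hk | hk
  · rw [Nat.lt_one_iff.1 hk, a_succ_zero]
  · exact a_eq_zero_of_lt (by omega)

def flipAt (σ : List ℤ) (s : Finset ℕ) : List ℤ :=
  σ.mapIdx fun i x => if i ∈ s then -x else x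

def nonBottoms (σ : List ℤ) : Finset ℕ :=
  (range σ.length).filter (¬ IsBottom σ ·)

theorem card_nonBottoms (σ : List ℤ) : #(nonBottoms σ) = σ.length - numRuns σ := by
  rw [nonBottoms, filter_not, card_sdiff_of_subset (filter_subset _ _), card_range]
  rfl

theorem length_flipAt (σ : List ℤ) (s : Finset ℕ) : (flipAt σ s).length = σ.length :=
  List.length_mapIdx

theorem getD_flipAt (σ : List ℤ) (s : Finset ℕ) (i : ℕ) :
    (flipAt σ s).getD i 0 = if i ∈ s then -σ.getD i 0 else σ.getD i 0 := by
  simp only [flipAt, List.getD_eq_getElem?_getD, List.getElem?_mapIdx]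
  cases σ[i]? <;> simp

theorem inOrb_flipAt (σ : List ℤ) {s : Finset ℕ} (hs : s ⊆ nonBottoms σ) :
    InOrb σ (flipAt σ s) := by
  refine ⟨length_flipAt σ s, fun i _ => ⟨?_, fun hb => ?_⟩⟩
  · rw [getD_flipAt]
    split_ifs <;> simp
  · have hi : i ∉ s := fun hi => (mem_filter.1 (hs hi)).2 hb
    rw [getD_flipAt, if_neg hi]

theorem exists_flipAt_of_inOrb {σ τ : List ℤ} (h : InOrb σ τ) :
    ∃ s ⊆ nonBottoms σ, flipAt σ s = τ := by
  obtain ⟨hlen, hτ⟩ := h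
  refine ⟨(range σ.length).filter (fun i => τ.getD i 0 ≠ σ.getD i 0), fun i hi => ?_, ?_⟩
  · obtain ⟨hi, hne⟩ := mem_filter.1 hi
    exact mem_filter.2 ⟨hi, fun hb => hne ((hτ i (mem_range.1 hi)).2 hb)⟩
  · refine List.ext_getElem (by rw [length_flipAt, hlen]) fun i h₁ h₂ => ?_
    rw [← List.getD_eq_getElem _ 0, ← List.getD_eq_getElem _ 0, getD_flipAt]
    rw [length_flipAt] at h₁
    have habs := (hτ i h₁).1
    split_ifs with hi
    · have hne := (mem_filter.1 hi).2
      rcases Int.natAbs_eq_natAbs_iff.1 habs with h | h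
      · exact absurd h hne
      · exact h.symm
    · simp only [mem_filter, mem_range, h₁, true_and, not_not] at hi
      exact hi.symm

theorem flipAt_injOn {σ : List ℤ} (hσ : 0 ∉ σ) :
    Set.InjOn (flipAt σ) {s | s ⊆ range σ.length} := by
  intro s hs t ht hst
  ext i
  by_cases hi : i < σ.length
  · have hne : σ.getD i 0 ≠ 0 := by
      rw [List.getD_eq_getElem _ _ hi]
      exact fun h => hσ (h ▸ List.getElem_mem hi)
    have := congrArg (·.getD i 0) hst
    simp only [getD_flipAt] at this
    by_cases his : i ∈ s <;> by_cases hit : i ∈ t <;>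
      simp only [his, hit, if_true, if_false] at this ⊢ <;> omega
  · exact iff_of_false (fun h => hi (mem_range.1 (hs h))) (fun h => hi (mem_range.1 (ht h)))

theorem card_inOrb {σ : List ℤ} (hσ : 0 ∉ σ) :
    Nat.card {τ // InOrb σ τ} = 2 ^ (σ.length - numRuns σ) := by
  have horbit : {τ | InOrb σ τ} = (nonBottoms σ).powerset.image (flipAt σ) := by
    ext τ
    simp only [Set.mem_ofPred_eq, coe_image, coe_powerset, Set.mem_image, Set.mem_preimage,
      Set.mem_powerset_iff, coe_subset]
    exact ⟨exists_flipAt_of_inOrb, fun ⟨s, hs, hτ⟩ => hτ ▸ inOrb_flipAt σ hs⟩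
  have hinj : Set.InjOn (flipAt σ) (nonBottoms σ).powerset :=
    (flipAt_injOn hσ).mono fun s hs => (mem_powerset.1 hs).trans (filter_subset _ _)
  change Nat.card ({τ | InOrb σ τ} : Set (List ℤ)) = _
  rw [horbit, Nat.card_coe_set_eq, Set.ncard_coe_finset, card_image_of_injOn hinj,
    card_powerset, card_nonBottoms]

theorem IsSignedPerm.zero_notMem {n : ℕ} {w : List ℤ} (hw : IsSignedPerm n w) : 0 ∉ w := by
  intro h
  have := hw.2.mem_iff.1 (List.mem_map_of_mem (f := Int.natAbs) h)
  obtain ⟨_, _, h0⟩ := List.mem_range'.1 this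
  omega

/-- The number of orbits of `R_n^B` under valley-hopping is the Bell number `B_{n-1}`;
equivalently `∑_{k=1}^{⌈n/2⌉} a_{n,k} = B_{n-1}`, and the orbit of a permutation with
`k` mruns has size `2^{n-k}`. -/
theorem orbit_count_bell (n : ℕ) (hn : 1 ≤ n) :
    (∑ k ∈ Finset.Icc 1 ((n + 1) / 2), a n k) = bell (n - 1) ∧
    (∀ σ, MemR n σ →
      Nat.card {τ : List ℤ // InOrb σ τ} = 2 ^ (n - numRuns σ)) := by
  refine ⟨?_, fun σ hσ => ?_⟩
  · obtain ⟨m, rfl⟩ : ∃ m, n = m + 1 := ⟨n - 1, by omega⟩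
    rw [sum_Icc_a_eq_rowSum hn, rowSum_succ_eq_bell, Nat.add_sub_cancel]
  · rw [card_inOrb hσ.1.zero_notMem, hσ.1.1]
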